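/- arXiv:2210.17492 — 6 statements merged into one kernel-verified Lean document; each statement's English description precedes it below -/
import Mathlib

section
/- If A S(0) - S(0) A* = i Π(0) Π(0)* holds and Π, S satisfy the ODEs Π'(t) = -i Σ_{k=1}^r (A - c_k I)^{-1} Π(t) H_k(t) and S'(t) = -Σ_{k=1}^r (A - c_k I)^{-1} Π(t) H_k(t) Π(t)* (A* - c_k I)^{-1}, then the identity A S(t) - S(t) A* = i Π(t) Π(t)* holds for all t. -/
open Matrix

attribute [local instance] Matrix.normedAddCommGroup Matrix.normedSpace

private theorem hasDerivAt_matrix {a b : ℕ} {f : ℝ → Matrix (Fin a) (Fin b) ℂ}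
    {f' : Matrix (Fin a) (Fin b) ℂ} {t : ℝ} :
    HasDerivAt f f' t ↔ ∀ i j, HasDerivAt (fun t => f t i j) (f' i j) t := by
  constructor
  · intro h i j
    exact (hasDerivAt_pi.mp ((hasDerivAt_pi (φ' := f')).mp h i) j)
  · intro h
    exact hasDerivAt_pi.mpr fun i => hasDerivAt_pi.mpr fun j => h i j

private theorem HasDerivAt.matMul {a b d : ℕ} {f : ℝ → Matrix (Fin a) (Fin b) ℂ}
    {g : ℝ → Matrix (Fin b) (Fin d) ℂ} {f' : Matrix (Fin a) (Fin b) ℂ}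
    {g' : Matrix (Fin b) (Fin d) ℂ} {t : ℝ}
    (hf : HasDerivAt f f' t) (hg : HasDerivAt g g' t) :
    HasDerivAt (fun t => f t * g t) (f' * g t + f t * g') t := by
  rw [hasDerivAt_matrix] at hf hg ⊢
  intro i j
  simp only [Matrix.mul_apply, Matrix.add_apply]
  have : HasDerivAt (fun t => ∑ k, f t i k * g t k j)
      (∑ k, (f' i k * g t k j + f t i k * g' k j)) t :=
    HasDerivAt.fun_sum fun k _ => (hf i k).mul (hg k j)
  simpa [Finset.sum_add_distrib] using this

private theorem HasDerivAt.matCT {a b : ℕ} {f : ℝ → Matrix (Fin a) (Fin b) ℂ}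
    {f' : Matrix (Fin a) (Fin b) ℂ} {t : ℝ} (hf : HasDerivAt f f' t) :
    HasDerivAt (fun t => (f t)ᴴ) f'ᴴ t := by
  rw [hasDerivAt_matrix] at hf ⊢
  intro i j
  simpa [Matrix.conjTranspose_apply] using (hf j i).star

/-- If `A S(0) - S(0) A* = i P(0) P(0)*` and `P`, `S` satisfy the ODEs
`P' = -i Σ_k (A - c_k I)⁻¹ P H_k` and `S' = -Σ_k (A - c_k I)⁻¹ P H_k P* (A* - c_k I)⁻¹`,
then `A S(t) - S(t) A* = i P(t) P(t)*` for all `t`. -/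
theorem stmt0 {n m r : ℕ} (A : Matrix (Fin n) (Fin n) ℂ) (c : Fin r → ℝ)
    (H : Fin r → ℝ → Matrix (Fin m) (Fin m) ℂ)
    (P : ℝ → Matrix (Fin n) (Fin m) ℂ) (S : ℝ → Matrix (Fin n) (Fin n) ℂ)
    (hHcont : ∀ k, Continuous (H k))
    (hHherm : ∀ k t, (H k t).IsHermitian)
    (hc : ∀ k, IsUnit (A - (c k : ℂ) • (1 : Matrix (Fin n) (Fin n) ℂ)).det)
    (hS0herm : (S 0).IsHermitian)
    (hid0 : A * S 0 - S 0 * Aᴴ = Complex.I • (P 0 * (P 0)ᴴ))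
    (hP : ∀ t, HasDerivAt P
      (-Complex.I • ∑ k, (A - (c k : ℂ) • 1)⁻¹ * P t * H k t) t)
    (hS : ∀ t, HasDerivAt S
      (-∑ k, (A - (c k : ℂ) • 1)⁻¹ * P t * H k t * (P t)ᴴ * (Aᴴ - (c k : ℂ) • 1)⁻¹) t) :
    ∀ t, A * S t - S t * Aᴴ = Complex.I • (P t * (P t)ᴴ) := by
  set R : Fin r → Matrix (Fin n) (Fin n) ℂ := fun k => (A - (c k : ℂ) • 1)⁻¹ with hRdef
  set Rb : Fin r → Matrix (Fin n) (Fin n) ℂ := fun k => (Aᴴ - (c k : ℂ) • 1)⁻¹ with hRbdef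
  have hconj : ∀ k, (A - (c k : ℂ) • (1 : Matrix (Fin n) (Fin n) ℂ))ᴴ
      = Aᴴ - (c k : ℂ) • 1 := by
    intro k
    simp [Matrix.conjTranspose_smul, Complex.star_def, Complex.conj_ofReal]
  have hAR : ∀ k, A * R k = 1 + (c k : ℂ) • R k := by
    intro k
    have h := Matrix.mul_nonsing_inv _ (hc k)
    calc A * R k = (A - (c k : ℂ) • 1) * R k + ((c k : ℂ) • 1) * R k := by
          rw [← add_mul, sub_add_cancel]
      _ = 1 + (c k : ℂ) • R k := by rw [h, Matrix.smul_mul, one_mul]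
  have hcdet : ∀ k, IsUnit (Aᴴ - (c k : ℂ) • (1 : Matrix (Fin n) (Fin n) ℂ)).det := by
    intro k
    rw [← hconj k, Matrix.det_conjTranspose]
    exact (hc k).star
  have hRbA : ∀ k, Rb k * Aᴴ = 1 + (c k : ℂ) • Rb k := by
    intro k
    have h := Matrix.nonsing_inv_mul _ (hcdet k)
    calc Rb k * Aᴴ = Rb k * (Aᴴ - (c k : ℂ) • 1) + Rb k * ((c k : ℂ) • 1) := by
          rw [← mul_add, sub_add_cancel]
      _ = 1 + (c k : ℂ) • Rb k := by rw [h, Matrix.mul_smul, mul_one]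
  have hRct : ∀ k, (R k)ᴴ = Rb k := by
    intro k
    rw [hRdef, Matrix.conjTranspose_nonsing_inv, hconj]
  set G : ℝ → Matrix (Fin n) (Fin n) ℂ :=
    fun t => A * S t - S t * Aᴴ - Complex.I • (P t * (P t)ᴴ) with hGdef
  have hG : ∀ t, HasDerivAt G 0 t := by
    intro t
    have h1 := (hasDerivAt_const t A).matMul (hS t)
    have h2 := (hS t).matMul (hasDerivAt_const t Aᴴ)
    have h3 := ((hP t).matMul (hP t).matCT).const_smul Complex.I
    have h := (h1.sub h2).sub h3
    convert h using 1
    case e'_4 => rfl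
    case e'_5 => rfl
    case e'_6 => rfl
    case e'_8 => rfl
    simp only [zero_mul, mul_zero, zero_add, add_zero]
    -- abbreviate
    set N : Fin r → Matrix (Fin n) (Fin n) ℂ :=
      fun k => P t * H k t * (P t)ᴴ with hNdef
    have hM : ∀ k, R k * P t * H k t * (P t)ᴴ = R k * N k := by
      intro k; simp only [hNdef, Matrix.mul_assoc]
    have hterm1 : A * -∑ k, R k * P t * H k t * (P t)ᴴ * Rb k
        = -∑ k, (N k * Rb k + (c k : ℂ) • (R k * N k * Rb k)) := by
      rw [mul_neg, Finset.mul_sum]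
      congr 1
      refine Finset.sum_congr rfl fun k _ => ?_
      rw [hM k, ← mul_assoc, ← mul_assoc, hAR k, add_mul, one_mul]
      simp only [hNdef, Matrix.add_mul, Matrix.smul_mul, Matrix.mul_assoc]
    have hterm2 : (-∑ k, R k * P t * H k t * (P t)ᴴ * Rb k) * Aᴴ
        = -∑ k, (R k * N k + (c k : ℂ) • (R k * N k * Rb k)) := by
      rw [neg_mul, Finset.sum_mul]
      congr 1
      refine Finset.sum_congr rfl fun k _ => ?_
      rw [hM k, mul_assoc, hRbA k, mul_add, mul_one, Matrix.mul_smul, mul_assoc]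
    have hterm3 : Complex.I • ((-Complex.I • ∑ k, R k * P t * H k t) * (P t)ᴴ
        + P t * (-Complex.I • ∑ k, R k * P t * H k t)ᴴ)
        = ∑ k, R k * N k - ∑ k, N k * Rb k := by
      have hCT : (-Complex.I • ∑ k, R k * P t * H k t)ᴴ
          = Complex.I • ∑ k, H k t * (P t)ᴴ * Rb k := by
        rw [Matrix.conjTranspose_smul]
        congr 1
        · simp [Complex.star_def]
        · rw [Matrix.conjTranspose_sum]
          refine Finset.sum_congr rfl fun k _ => ?_
          rw [Matrix.conjTranspose_mul, Matrix.conjTranspose_mul, hRct k,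
            (hHherm k t).eq]
          simp only [Matrix.mul_assoc]
      rw [hCT, Matrix.mul_smul, Matrix.smul_mul, smul_add, smul_smul, smul_smul]
      rw [Matrix.sum_mul, Matrix.mul_sum]
      have e1 : ∀ k, R k * P t * H k t * (P t)ᴴ = R k * N k := hM
      have e2 : ∀ k, P t * (H k t * (P t)ᴴ * Rb k) = N k * Rb k := by
        intro k; simp only [hNdef, Matrix.mul_assoc]
      simp only [e1, e2]
      rw [show Complex.I * -Complex.I = 1 by simp [Complex.I_mul_I],
        show Complex.I * Complex.I = -1 by simp [Complex.I_mul_I]]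
      simp [sub_eq_add_neg]
    rw [hterm1, hterm2, hterm3]
    simp only [Finset.sum_add_distrib]
    abel
  have hconst : ∀ t, G t = G 0 := fun t =>
    is_const_of_deriv_eq_zero (fun x => (hG x).differentiableAt)
      (fun x => (hG x).deriv) t 0
  intro t
  have h0 : G 0 = 0 := by
    rw [hGdef]
    simp only
    rw [hid0, sub_self]
  have := (hconst t).trans h0
  rw [hGdef] at this
  simp only at this
  exact sub_eq_zero.mp this
end

section
/- Under the identity A S(t) - S(t) A* = i Π(t) Π(t)*, if S(t) is invertible and c ∈ ℝ is not an eigenvalue of A, then the transfer matrix w_A(t,c) := I_m - i Π(t)* S(t)^{-1} (A - c I_n)^{-1} Π(t) is unitary, i.e., w_A(t,c) w_A(t,c)* = I_m. -/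
/-!
Since `c` is real, `B = A - c` satisfies the same identity `B S - S Bᴴ = i P Pᴴ`. Multiplying it
by `B⁻¹` on the left and `Bᴴ⁻¹` on the right gives `B⁻¹ P Pᴴ Bᴴ⁻¹ = -i (S Bᴴ⁻¹ - B⁻¹ S)`, and
sandwiching this between `Pᴴ S⁻¹` and `S⁻¹ P` shows that `X = Pᴴ S⁻¹ B⁻¹ P` satisfies
`X Xᴴ = i (X - Xᴴ)`. Expanded, this is exactly `(1 - i X)(1 - i X)ᴴ = (1 - i X)(1 + i Xᴴ) = 1`.
-/

open Matrix Complex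

theorem one_sub_I_smul_mul_one_add_I_smul_eq_one {R : Type*} [Ring R] [Algebra ℂ R] {X Y : R}
    (h : X * Y = I • (X - Y)) : (1 - I • X) * (1 + I • Y) = 1 := by
  have hII : (I • X) * (I • Y) = -(X * Y) := by
    rw [smul_mul_smul_comm, I_mul_I, neg_one_smul]
  rw [mul_add, mul_one, sub_mul, one_mul, hII, h, smul_sub]
  abel

namespace Matrix

variable {ι κ : Type*} [Fintype ι] [DecidableEq ι]

theorem conjTranspose_one_sub_I_smul [DecidableEq κ] (X : Matrix κ κ ℂ) :
    (1 - I • X)ᴴ = 1 + I • Xᴴ := by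
  rw [conjTranspose_sub, conjTranspose_one, conjTranspose_smul, Complex.star_def, conj_I,
    neg_smul, sub_neg_eq_add]

theorem sub_smul_one_lyapunov (A S : Matrix ι ι ℂ) (c : ℝ) :
    (A - (c : ℂ) • 1) * S - S * (A - (c : ℂ) • 1)ᴴ = A * S - S * Aᴴ := by
  rw [conjTranspose_sub, conjTranspose_smul, conjTranspose_one, Complex.star_def, conj_ofReal,
    sub_mul, mul_sub, smul_mul_assoc, mul_smul_comm, one_mul, mul_one]
  abel

theorem inv_mul_sylvester_mul_inv {α : Type*} [CommRing α] {B C : Matrix ι ι α}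
    (hB : IsUnit B.det) (hC : IsUnit C.det) (S : Matrix ι ι α) :
    B⁻¹ * (B * S - S * C) * C⁻¹ = S * C⁻¹ - B⁻¹ * S := by
  rw [mul_sub, sub_mul, ← Matrix.mul_assoc, nonsing_inv_mul B hB, Matrix.one_mul,
    Matrix.mul_assoc B⁻¹, Matrix.mul_assoc S, mul_nonsing_inv C hC, Matrix.mul_one]

theorem mul_conjTranspose_eq_I_smul_sub_conjTranspose [Fintype κ] {B S : Matrix ι ι ℂ}
    {P : Matrix ι κ ℂ}
    (hS : S.IsHermitian) (hSdet : IsUnit S.det) (hB : IsUnit B.det)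
    (h : B * S - S * Bᴴ = I • (P * Pᴴ)) :
    (Pᴴ * S⁻¹ * B⁻¹ * P) * (Pᴴ * S⁻¹ * B⁻¹ * P)ᴴ
      = I • (Pᴴ * S⁻¹ * B⁻¹ * P - (Pᴴ * S⁻¹ * B⁻¹ * P)ᴴ) := by
  have hBH : IsUnit Bᴴ.det := by rw [det_conjTranspose]; exact hB.star
  have hXH : (Pᴴ * S⁻¹ * B⁻¹ * P)ᴴ = Pᴴ * Bᴴ⁻¹ * S⁻¹ * P := by
    simp only [conjTranspose_mul, conjTranspose_conjTranspose, conjTranspose_nonsing_inv, hS.eq,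
      Matrix.mul_assoc]
  have hPP : P * Pᴴ = (-I) • (B * S - S * Bᴴ) := by
    rw [h, smul_smul, neg_mul, I_mul_I, neg_neg, one_smul]
  have hsandwich : Pᴴ * S⁻¹ * (S * Bᴴ⁻¹ - B⁻¹ * S) * S⁻¹ * P
      = Pᴴ * Bᴴ⁻¹ * S⁻¹ * P - Pᴴ * S⁻¹ * B⁻¹ * P := by
    simp only [Matrix.mul_sub, Matrix.sub_mul, Matrix.mul_assoc,
      nonsing_inv_mul_cancel_left _ _ hSdet, mul_nonsing_inv_cancel_left _ _ hSdet]
  calc (Pᴴ * S⁻¹ * B⁻¹ * P) * (Pᴴ * S⁻¹ * B⁻¹ * P)ᴴ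
      = Pᴴ * S⁻¹ * (B⁻¹ * (P * Pᴴ) * Bᴴ⁻¹) * S⁻¹ * P := by
        rw [hXH]; simp only [Matrix.mul_assoc]
    _ = (-I) • (Pᴴ * Bᴴ⁻¹ * S⁻¹ * P - Pᴴ * S⁻¹ * B⁻¹ * P) := by
        rw [hPP, Matrix.mul_smul, Matrix.smul_mul, inv_mul_sylvester_mul_inv hB hBH,
          Matrix.mul_smul, Matrix.smul_mul, Matrix.smul_mul, hsandwich]
    _ = I • (Pᴴ * S⁻¹ * B⁻¹ * P - (Pᴴ * S⁻¹ * B⁻¹ * P)ᴴ) := by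
        rw [hXH, neg_smul, ← smul_neg, neg_sub]

end Matrix

/-- Under `A S - S A* = i P P*`, with `S = S*` invertible and real `c ∉ σ(A)`,
the transfer matrix `w_A(c) = I - i P* S⁻¹ (A - cI)⁻¹ P` is unitary. -/
theorem stmt1 {n m : ℕ} (A S : Matrix (Fin n) (Fin n) ℂ) (P : Matrix (Fin n) (Fin m) ℂ)
    (c : ℝ)
    (hSherm : S.IsHermitian) (hSinv : IsUnit S.det)
    (hc : IsUnit (A - (c : ℂ) • (1 : Matrix (Fin n) (Fin n) ℂ)).det)
    (hid : A * S - S * Aᴴ = Complex.I • (P * Pᴴ)) :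
    ((1 : Matrix (Fin m) (Fin m) ℂ) - Complex.I • (Pᴴ * S⁻¹ * (A - (c : ℂ) • 1)⁻¹ * P)) *
      ((1 : Matrix (Fin m) (Fin m) ℂ) - Complex.I • (Pᴴ * S⁻¹ * (A - (c : ℂ) • 1)⁻¹ * P))ᴴ
      = 1 := by
  have hshift := (sub_smul_one_lyapunov A S c).trans hid
  rw [conjTranspose_one_sub_I_smul]
  exact one_sub_I_smul_mul_one_add_I_smul_eq_one
    (mul_conjTranspose_eq_I_smul_sub_conjTranspose hSherm hSinv hc hshift)
end

section
/- Under the identity A S - S A* = i Π Π* with S = S* invertible and c ∈ ℝ not an eigenvalue of A, one has S^{-1} Π w_A(c) = (A* - c I_n) S^{-1} (A - c I_n)^{-1} Π, where w_A(c) = I_m - i Π* S^{-1} (A - c I_n)^{-1} Π. -/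
open Matrix

/-!
Write `B = A - cI` and `B' = A* - cI`. Scalars commute with `S`, so the hypothesis reads
`B S - S B' = i Π Π*`. Substituting this for `i Π Π*` in `S⁻¹ Π (i Π* S⁻¹ B⁻¹ Π)` gives
`S⁻¹ (B S - S B') S⁻¹ B⁻¹ Π = S⁻¹ Π - B' S⁻¹ B⁻¹ Π`, which is the claim after rearranging.
-/

namespace Matrix

variable {ι κ R : Type*} [Fintype ι] [DecidableEq ι] [Fintype κ] [DecidableEq κ] [CommRing R]

theorem mul_sub_mul_eq_sub_smul_one (A S B : Matrix ι ι R) (c : R) :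
    A * S - S * B = (A - c • 1) * S - S * (B - c • 1) := by
  simp only [sub_mul, mul_sub, smul_mul_assoc, mul_smul_comm, one_mul, mul_one]
  abel

theorem inv_mul_mul_one_sub_of_mul_sub_mul_eq (S B B' : Matrix ι ι R) (P : Matrix ι κ R)
    (Q : Matrix κ ι R) (hS : IsUnit S.det) (hB : IsUnit B.det) (h : B * S - S * B' = P * Q) :
    S⁻¹ * P * (1 - Q * S⁻¹ * B⁻¹ * P) = B' * S⁻¹ * B⁻¹ * P := by
  have hPQ : S⁻¹ * P * (Q * S⁻¹ * B⁻¹ * P) = S⁻¹ * (P * Q) * S⁻¹ * B⁻¹ * P := by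
    simp only [Matrix.mul_assoc]
  have hBS : S⁻¹ * (B * S) * S⁻¹ * B⁻¹ * P = S⁻¹ * P := by
    simp only [Matrix.mul_assoc, mul_nonsing_inv_cancel_left _ _ hS,
      mul_nonsing_inv_cancel_left _ _ hB]
  have hSB' : S⁻¹ * (S * B') * S⁻¹ * B⁻¹ * P = B' * S⁻¹ * B⁻¹ * P := by
    rw [nonsing_inv_mul_cancel_left _ _ hS]
  rw [Matrix.mul_sub, Matrix.mul_one, hPQ, ← h, Matrix.mul_sub, Matrix.sub_mul, Matrix.sub_mul,
    Matrix.sub_mul, hBS, hSB', sub_sub_cancel]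

end Matrix

theorem stmt2_general {n m : ℕ} (A S : Matrix (Fin n) (Fin n) ℂ) (P : Matrix (Fin n) (Fin m) ℂ)
    (c : ℝ)
    (hSinv : IsUnit S.det)
    (hc : IsUnit (A - (c : ℂ) • (1 : Matrix (Fin n) (Fin n) ℂ)).det)
    (hid : A * S - S * Aᴴ = Complex.I • (P * Pᴴ)) :
    S⁻¹ * P * ((1 : Matrix (Fin m) (Fin m) ℂ) -
        Complex.I • (Pᴴ * S⁻¹ * (A - (c : ℂ) • 1)⁻¹ * P))
      = (Aᴴ - (c : ℂ) • 1) * S⁻¹ * (A - (c : ℂ) • 1)⁻¹ * P := by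
  have hshifted : (A - (c : ℂ) • 1) * S - S * (Aᴴ - (c : ℂ) • 1) = P * (Complex.I • Pᴴ) := by
    rw [← mul_sub_mul_eq_sub_smul_one, hid, Matrix.mul_smul]
  simpa only [Matrix.smul_mul] using
    inv_mul_mul_one_sub_of_mul_sub_mul_eq S _ _ P _ hSinv hc hshifted

/-- Under `A S - S A* = i P P*` with `S = S*` invertible and real `c ∉ σ(A)`,
`S⁻¹ P w_A(c) = (A* - cI) S⁻¹ (A - cI)⁻¹ P`. -/
theorem stmt2 {n m : ℕ} (A S : Matrix (Fin n) (Fin n) ℂ) (P : Matrix (Fin n) (Fin m) ℂ)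
    (c : ℝ)
    (hSherm : S.IsHermitian) (hSinv : IsUnit S.det)
    (hc : IsUnit (A - (c : ℂ) • (1 : Matrix (Fin n) (Fin n) ℂ)).det)
    (hid : A * S - S * Aᴴ = Complex.I • (P * Pᴴ)) :
    S⁻¹ * P * ((1 : Matrix (Fin m) (Fin m) ℂ) -
        Complex.I • (Pᴴ * S⁻¹ * (A - (c : ℂ) • 1)⁻¹ * P))
      = (Aᴴ - (c : ℂ) • 1) * S⁻¹ * (A - (c : ℂ) • 1)⁻¹ * P :=
  stmt2_general A S P c hSinv hc hid
end

section
/- Let Π(t), S(t) satisfy Π'(t) = -i Σ_k (A - c_k I)^{-1} Π(t) H_k(t), the identity A S(t) - S(t) A* = i Π(t) Π(t)*, and suppose (Π* S^{-1})'(t) = i Σ_k H̃_k(t) Π(t)* S(t)^{-1} (A - c_k I)^{-1} with H̃_k(t) = w_A(t,c_k) H_k(t) w_A(t,c_k)^{-1}. Then the conservation law (Π(t)* S(t)^{-1} Π(t))' = Σ_{k=1}^r (H̃_k(t) - H_k(t)) holds. -/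
open Matrix

attribute [local instance] Matrix.normedAddCommGroup Matrix.normedSpace

lemma matMulDeriv {p q s : ℕ} {f : ℝ → Matrix (Fin p) (Fin q) ℂ}
    {g : ℝ → Matrix (Fin q) (Fin s) ℂ} {f' : Matrix (Fin p) (Fin q) ℂ}
    {g' : Matrix (Fin q) (Fin s) ℂ} {t : ℝ}
    (hf : HasDerivAt f f' t) (hg : HasDerivAt g g' t) :
    HasDerivAt (fun x => f x * g x) (f' * g t + f t * g') t := by
  let L1 : Matrix (Fin p) (Fin q) ℂ →ₗ[ℝ] Matrix (Fin q) (Fin s) ℂ →L[ℝ] Matrix (Fin p) (Fin s) ℂ :=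
    { toFun := fun X => LinearMap.toContinuousLinearMap
        { toFun := fun Y => X * Y
          map_add' := fun Y Z => by simp [Matrix.mul_add]
          map_smul' := fun a Y => by simp [Matrix.mul_smul] }
      map_add' := fun X Z => by ext Y : 1; simp [Matrix.add_mul]
      map_smul' := fun a X => by ext Y : 1; simp [Matrix.smul_mul] }
  let L : Matrix (Fin p) (Fin q) ℂ →L[ℝ] Matrix (Fin q) (Fin s) ℂ →L[ℝ] Matrix (Fin p) (Fin s) ℂ :=
    LinearMap.toContinuousLinearMap L1
  have hf2 : ∀ i j, HasDerivAt (fun x => f x i j) (f' i j) t := fun i j =>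
    hasDerivAt_pi.mp (hasDerivAt_pi.mp hf i) j
  have hg2 : ∀ i j, HasDerivAt (fun x => g x i j) (g' i j) t := fun i j =>
    hasDerivAt_pi.mp (hasDerivAt_pi.mp hg i) j
  refine hasDerivAt_pi.mpr fun i => hasDerivAt_pi.mpr fun k => ?_
  have hs := HasDerivAt.fun_sum (u := Finset.univ) (fun j _ => (hf2 i j).mul (hg2 j k))
  simp only [Matrix.mul_apply, Matrix.add_apply]
  convert hs using 1
  · funext x; rfl
  · rw [Finset.sum_add_distrib]


/-- conservation law `(Π* S⁻¹ Π)' = Σ_k (H̃_k - H_k)` where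
`H̃_k = w_A(c_k) H_k w_A(c_k)⁻¹`, `w_A(t,c) = I - i Π* S⁻¹ (A - cI)⁻¹ Π`. -/
theorem stmt7 {n m r : ℕ} (A : Matrix (Fin n) (Fin n) ℂ) (c : Fin r → ℝ)
    (H Ht : Fin r → ℝ → Matrix (Fin m) (Fin m) ℂ)
    (P : ℝ → Matrix (Fin n) (Fin m) ℂ) (S : ℝ → Matrix (Fin n) (Fin n) ℂ)
    (w : ℝ → Fin r → Matrix (Fin m) (Fin m) ℂ)
    (hcdist : Function.Injective c)
    (hc : ∀ k, IsUnit (A - (c k : ℂ) • (1 : Matrix (Fin n) (Fin n) ℂ)).det)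
    (hHherm : ∀ k t, (H k t).IsHermitian)
    (hSherm : ∀ t, (S t).IsHermitian) (hSinv : ∀ t, IsUnit (S t).det)
    (hw : ∀ t k, w t k
      = (1 : Matrix (Fin m) (Fin m) ℂ) - Complex.I • ((P t)ᴴ * (S t)⁻¹ * (A - (c k : ℂ) • 1)⁻¹ * P t))
    (hHt : ∀ k t, Ht k t = w t k * H k t * (w t k)⁻¹)
    (hP : ∀ t, HasDerivAt P (-Complex.I • ∑ k, (A - (c k : ℂ) • 1)⁻¹ * P t * H k t) t)
    (hid : ∀ t, A * S t - S t * Aᴴ = Complex.I • (P t * (P t)ᴴ))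
    (hPS : ∀ t, HasDerivAt (fun s => (P s)ᴴ * (S s)⁻¹)
      (Complex.I • ∑ k, Ht k t * (P t)ᴴ * (S t)⁻¹ * (A - (c k : ℂ) • 1)⁻¹) t) :
    ∀ t, HasDerivAt (fun s => (P s)ᴴ * (S s)⁻¹ * P s) (∑ k, (Ht k t - H k t)) t := by
  intro t
  -- abbreviations via notation
  have hTT : (S t)⁻¹ * S t = 1 := nonsing_inv_mul _ (hSinv t)
  have hTT' : S t * (S t)⁻¹ = 1 := mul_nonsing_inv _ (hSinv t)
  have hXB : ∀ k, (A - (c k : ℂ) • 1)⁻¹ * (A - (c k : ℂ) • 1) = 1 :=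
    fun k => nonsing_inv_mul _ (hc k)
  have hBX : ∀ k, (A - (c k : ℂ) • 1) * (A - (c k : ℂ) • 1)⁻¹ = 1 :=
    fun k => mul_nonsing_inv _ (hc k)
  have hB'det : ∀ k, IsUnit (Aᴴ - (c k : ℂ) • (1 : Matrix (Fin n) (Fin n) ℂ)).det := by
    intro k
    have h1 : (A - (c k : ℂ) • (1 : Matrix (Fin n) (Fin n) ℂ))ᴴ = Aᴴ - (c k : ℂ) • 1 := by
      simp [conjTranspose_sub, conjTranspose_smul, Complex.star_def, Complex.conj_ofReal]
    have h2 := (hc k).star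
    rwa [← Matrix.det_conjTranspose, h1] at h2
  have hB'X' : ∀ k, (Aᴴ - (c k : ℂ) • 1) * (Aᴴ - (c k : ℂ) • 1)⁻¹ = 1 :=
    fun k => mul_nonsing_inv _ (hB'det k)
  -- shifted identity
  have hid2 : ∀ k, (A - (c k : ℂ) • 1) * S t - S t * (Aᴴ - (c k : ℂ) • 1)
      = Complex.I • (P t * (P t)ᴴ) := by
    intro k
    rw [← hid t]
    simp only [Matrix.sub_mul, Matrix.mul_sub, Matrix.smul_mul, Matrix.mul_smul,
      Matrix.one_mul, Matrix.mul_one]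
    abel
  have hQQ : ∀ k, P t * (P t)ᴴ
      = -Complex.I • ((A - (c k : ℂ) • 1) * S t - S t * (Aᴴ - (c k : ℂ) • 1)) := by
    intro k
    rw [hid2 k, smul_smul]
    norm_num [Complex.I_mul_I]
  -- sandwich identity
  have hsand : ∀ k, (A - (c k : ℂ) • 1)⁻¹ * (P t * (P t)ᴴ) * (Aᴴ - (c k : ℂ) • 1)⁻¹
      = -Complex.I • (S t * (Aᴴ - (c k : ℂ) • 1)⁻¹ - (A - (c k : ℂ) • 1)⁻¹ * S t) := by
    intro k
    rw [hQQ k, Matrix.mul_smul, Matrix.smul_mul]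
    congr 1
    have expand : (A - (c k : ℂ) • 1)⁻¹ * ((A - (c k : ℂ) • 1) * S t - S t * (Aᴴ - (c k : ℂ) • 1))
          * (Aᴴ - (c k : ℂ) • 1)⁻¹
        = ((A - (c k : ℂ) • 1)⁻¹ * (A - (c k : ℂ) • 1)) * (S t * (Aᴴ - (c k : ℂ) • 1)⁻¹)
          - ((A - (c k : ℂ) • 1)⁻¹ * S t) * ((Aᴴ - (c k : ℂ) • 1) * (Aᴴ - (c k : ℂ) • 1)⁻¹) := by
      simp only [Matrix.mul_sub, Matrix.sub_mul, Matrix.mul_assoc]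
    rw [expand, hXB, hB'X', Matrix.one_mul, Matrix.mul_one]
  -- Y * Z identity
  have hYZ : ∀ k, ((P t)ᴴ * (S t)⁻¹ * (A - (c k : ℂ) • 1)⁻¹ * P t)
        * ((P t)ᴴ * (Aᴴ - (c k : ℂ) • 1)⁻¹ * (S t)⁻¹ * P t)
      = Complex.I • ((P t)ᴴ * (S t)⁻¹ * (A - (c k : ℂ) • 1)⁻¹ * P t)
        - Complex.I • ((P t)ᴴ * (Aᴴ - (c k : ℂ) • 1)⁻¹ * (S t)⁻¹ * P t) := by
    intro k
    have h1 : ((P t)ᴴ * (S t)⁻¹ * (A - (c k : ℂ) • 1)⁻¹ * P t)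
          * ((P t)ᴴ * (Aᴴ - (c k : ℂ) • 1)⁻¹ * (S t)⁻¹ * P t)
        = (P t)ᴴ * (S t)⁻¹
          * ((A - (c k : ℂ) • 1)⁻¹ * (P t * (P t)ᴴ) * (Aᴴ - (c k : ℂ) • 1)⁻¹)
          * ((S t)⁻¹ * P t) := by simp only [Matrix.mul_assoc]
    rw [h1, hsand k, Matrix.mul_smul, Matrix.smul_mul]
    have h2 : (P t)ᴴ * (S t)⁻¹
          * (S t * (Aᴴ - (c k : ℂ) • 1)⁻¹ - (A - (c k : ℂ) • 1)⁻¹ * S t) * ((S t)⁻¹ * P t)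
        = (P t)ᴴ * (((S t)⁻¹ * S t) * ((Aᴴ - (c k : ℂ) • 1)⁻¹ * ((S t)⁻¹ * P t)))
          - (P t)ᴴ * (S t)⁻¹ * (A - (c k : ℂ) • 1)⁻¹ * ((S t * (S t)⁻¹) * P t) := by
      simp only [Matrix.mul_sub, Matrix.sub_mul, Matrix.mul_assoc]
    rw [h2, hTT, hTT']
    simp only [Matrix.one_mul, Matrix.mul_one]
    have h3 : (P t)ᴴ * ((Aᴴ - (c k : ℂ) • 1)⁻¹ * ((S t)⁻¹ * P t))
        = (P t)ᴴ * (Aᴴ - (c k : ℂ) • 1)⁻¹ * (S t)⁻¹ * P t := by simp only [Matrix.mul_assoc]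
    rw [h3]
    module
  -- w is invertible with explicit right inverse
  have hwu : ∀ k, w t k
      * (1 + Complex.I • ((P t)ᴴ * (Aᴴ - (c k : ℂ) • 1)⁻¹ * (S t)⁻¹ * P t)) = 1 := by
    intro k
    rw [hw t k]
    have expand : ((1 : Matrix (Fin m) (Fin m) ℂ)
          - Complex.I • ((P t)ᴴ * (S t)⁻¹ * (A - (c k : ℂ) • 1)⁻¹ * P t))
        * (1 + Complex.I • ((P t)ᴴ * (Aᴴ - (c k : ℂ) • 1)⁻¹ * (S t)⁻¹ * P t))
        = 1 + Complex.I • ((P t)ᴴ * (Aᴴ - (c k : ℂ) • 1)⁻¹ * (S t)⁻¹ * P t)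
          - Complex.I • ((P t)ᴴ * (S t)⁻¹ * (A - (c k : ℂ) • 1)⁻¹ * P t)
          + (((P t)ᴴ * (S t)⁻¹ * (A - (c k : ℂ) • 1)⁻¹ * P t)
            * ((P t)ᴴ * (Aᴴ - (c k : ℂ) • 1)⁻¹ * (S t)⁻¹ * P t)) := by
      simp only [Matrix.mul_add, Matrix.add_mul, Matrix.sub_mul, Matrix.mul_sub,
        Matrix.smul_mul, Matrix.mul_smul, Matrix.one_mul, Matrix.mul_one, smul_smul,
        Complex.I_mul_I, neg_smul, one_smul]
      match_scalars <;> simp [Complex.I_sq]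
    rw [expand, hYZ k]
    abel
  have hwinv : ∀ k, (Ht k t) * w t k = w t k * H k t := by
    intro k
    have huw : (1 + Complex.I • ((P t)ᴴ * (Aᴴ - (c k : ℂ) • 1)⁻¹ * (S t)⁻¹ * P t))
        * w t k = 1 := mul_eq_one_comm.mp (hwu k)
    have hinv : (w t k)⁻¹
        = 1 + Complex.I • ((P t)ᴴ * (Aᴴ - (c k : ℂ) • 1)⁻¹ * (S t)⁻¹ * P t) :=
      Matrix.inv_eq_right_inv (hwu k)
    calc Ht k t * w t k = w t k * H k t * ((w t k)⁻¹ * w t k) := by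
          rw [hHt k t]; simp only [Matrix.mul_assoc]
      _ = w t k * H k t := by rw [hinv, huw, Matrix.mul_one]
  -- assemble
  have hD := matMulDeriv (hPS t) (hP t)
  have e1 : (Complex.I • ∑ k, Ht k t * (P t)ᴴ * (S t)⁻¹ * (A - (c k : ℂ) • 1)⁻¹) * P t
      = ∑ k, (Ht k t - Ht k t * w t k) := by
    rw [Matrix.smul_mul, Matrix.sum_mul, Finset.smul_sum]
    refine Finset.sum_congr rfl fun k _ => ?_
    have h1 : Complex.I • (Ht k t * (P t)ᴴ * (S t)⁻¹ * (A - (c k : ℂ) • 1)⁻¹ * P t)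
        = Ht k t * (Complex.I • ((P t)ᴴ * (S t)⁻¹ * (A - (c k : ℂ) • 1)⁻¹ * P t)) := by
      rw [Matrix.mul_smul]; congr 1; simp only [Matrix.mul_assoc]
    have h2 : Complex.I • ((P t)ᴴ * (S t)⁻¹ * (A - (c k : ℂ) • 1)⁻¹ * P t) = 1 - w t k := by
      rw [hw t k]; abel
    rw [h1, h2, Matrix.mul_sub, Matrix.mul_one]
  have e2 : (P t)ᴴ * (S t)⁻¹ * (-Complex.I • ∑ k, (A - (c k : ℂ) • 1)⁻¹ * P t * H k t)
      = ∑ k, (w t k * H k t - H k t) := by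
    rw [Matrix.mul_smul, Matrix.mul_sum, Finset.smul_sum]
    refine Finset.sum_congr rfl fun k _ => ?_
    have h1 : -Complex.I • ((P t)ᴴ * (S t)⁻¹ * ((A - (c k : ℂ) • 1)⁻¹ * P t * H k t))
        = (-Complex.I • ((P t)ᴴ * (S t)⁻¹ * (A - (c k : ℂ) • 1)⁻¹ * P t)) * H k t := by
      rw [Matrix.smul_mul]; congr 1; simp only [Matrix.mul_assoc]
    have h2 : -Complex.I • ((P t)ᴴ * (S t)⁻¹ * (A - (c k : ℂ) • 1)⁻¹ * P t)
        = w t k - 1 := by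
      rw [hw t k, neg_smul]; abel
    rw [h1, h2, Matrix.sub_mul, Matrix.one_mul]
  have hEq : (Complex.I • ∑ k, Ht k t * (P t)ᴴ * (S t)⁻¹ * (A - (c k : ℂ) • 1)⁻¹) * P t
      + (P t)ᴴ * (S t)⁻¹ * (-Complex.I • ∑ k, (A - (c k : ℂ) • 1)⁻¹ * P t * H k t)
      = ∑ k, (Ht k t - H k t) := by
    rw [e1, e2, ← Finset.sum_add_distrib]
    refine Finset.sum_congr rfl fun k _ => ?_
    rw [hwinv k]
    exact sub_add_sub_cancel _ _ _
  exact hEq ▸ hD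
end

section
/- Under the identity A S - S A* = i Π Π* with S Hermitian invertible and c_k real not in σ(A), the quadratic form satisfies ψ̃* H̃_k ψ̃ = E* (A* - c_k I) S^{-1} (A - c_k I)^{-1} Π H_k Π* ((A* - c_k I) S^{-1} (A - c_k I)^{-1})* E, where ψ̃ = Π* S^{-1} E, E = exp{ i Σ_j ζ_j (A - c_j I)^{-1} }, and H̃_k = w_A(c_k) H_k w_A(c_k)*. -/
set_option maxHeartbeats 1000000


open Matrix

/-- Under `A S - S A* = i Π Π*`, with `ψ̃ = Π* S⁻¹ E`,
`E = exp{i Σ_j ζ_j (A - c_j I)⁻¹}`, `H̃_k = w_A(c_k) H_k w_A(c_k)*`, one has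
`ψ̃* H̃_k ψ̃ = E* (A* - c_k I) S⁻¹ (A - c_k I)⁻¹ Π H_k Π* ((A* - c_k I) S⁻¹ (A - c_k I)⁻¹)* E`. -/
theorem stmt9 {n m r : ℕ} (A S : Matrix (Fin n) (Fin n) ℂ) (P : Matrix (Fin n) (Fin m) ℂ)
    (c : Fin r → ℝ) (ζ : Fin r → ℝ) (H : Fin r → Matrix (Fin m) (Fin m) ℂ)
    (hcdist : Function.Injective c)
    (hc : ∀ k, IsUnit (A - (c k : ℂ) • (1 : Matrix (Fin n) (Fin n) ℂ)).det)
    (hSherm : S.IsHermitian) (hSinv : IsUnit S.det)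
    (hHherm : ∀ k, (H k).IsHermitian)
    (hid : A * S - S * Aᴴ = Complex.I • (P * Pᴴ)) :
    ∀ k,
      let E := NormedSpace.exp (Complex.I • ∑ j, (ζ j : ℂ) • (A - (c j : ℂ) • 1)⁻¹)
      let w := (1 : Matrix (Fin m) (Fin m) ℂ) - Complex.I • (Pᴴ * S⁻¹ * (A - (c k : ℂ) • 1)⁻¹ * P)
      let ψ := Pᴴ * S⁻¹ * E
      let T := (Aᴴ - (c k : ℂ) • 1) * S⁻¹ * (A - (c k : ℂ) • 1)⁻¹
      ψᴴ * (w * H k * wᴴ) * ψ = Eᴴ * T * P * H k * Pᴴ * Tᴴ * E := by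
  intro k E w ψ T
  have hψdef : ψ = Pᴴ * S⁻¹ * E := rfl
  have hwdef : w = (1 : Matrix (Fin m) (Fin m) ℂ)
      - Complex.I • (Pᴴ * S⁻¹ * (A - (c k : ℂ) • 1)⁻¹ * P) := rfl
  have hTdef : T = (Aᴴ - (c k : ℂ) • 1) * S⁻¹ * (A - (c k : ℂ) • 1)⁻¹ := rfl
  clear_value E w ψ T
  set M : Matrix (Fin n) (Fin n) ℂ := A - (c k : ℂ) • 1 with hMdef
  have hMinv : M * M⁻¹ = 1 := Matrix.mul_nonsing_inv _ (hc k)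
  have hS1 : S * S⁻¹ = 1 := Matrix.mul_nonsing_inv _ hSinv
  have hS2 : S⁻¹ * S = 1 := Matrix.nonsing_inv_mul _ hSinv
  have hSh : (S⁻¹)ᴴ = S⁻¹ := hSherm.inv.eq
  have keyS : P * w = S * (T * P) := by
    have h1 : P * w = P - (Complex.I • (P * Pᴴ)) * (S⁻¹ * (M⁻¹ * P)) := by
      rw [hwdef]
      simp only [Matrix.mul_sub, Matrix.mul_one, Matrix.mul_smul, Matrix.smul_mul,
        Matrix.mul_assoc]
    rw [h1, ← hid]
    have h2 : (A * S - S * Aᴴ) * (S⁻¹ * (M⁻¹ * P))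
        = A * (M⁻¹ * P) - S * (Aᴴ * (S⁻¹ * (M⁻¹ * P))) := by
      rw [Matrix.sub_mul]
      congr 1
      · rw [← Matrix.mul_assoc, Matrix.mul_assoc A S S⁻¹, hS1, Matrix.mul_one]
      · exact (Matrix.mul_assoc _ _ _)
    rw [h2]
    have h3 : S * (T * P) = S * (Aᴴ * (S⁻¹ * (M⁻¹ * P))) - (c k : ℂ) • (M⁻¹ * P) := by
      rw [hTdef]
      simp only [Matrix.sub_mul, Matrix.smul_mul, Matrix.mul_sub, Matrix.mul_smul,
        Matrix.one_mul, Matrix.mul_assoc]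
      rw [← Matrix.mul_assoc S S⁻¹, hS1, Matrix.one_mul]
    rw [h3]
    have h5 : A * (M⁻¹ * P) - (c k : ℂ) • (M⁻¹ * P) = P := by
      have : (A - (c k : ℂ) • 1) * (M⁻¹ * P) = P := by
        rw [← hMdef, ← Matrix.mul_assoc, hMinv, Matrix.one_mul]
      rw [Matrix.sub_mul, Matrix.smul_mul, Matrix.one_mul] at this
      exact this
    rw [sub_eq_iff_eq_add] at h5
    rw [h5]
    abel
  have key : S⁻¹ * P * w = T * P := by
    rw [Matrix.mul_assoc, keyS, ← Matrix.mul_assoc, hS2, Matrix.one_mul]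
  have hψ : ψᴴ = Eᴴ * (S⁻¹ * P) := by
    rw [hψdef]
    simp only [Matrix.conjTranspose_mul, hSh, Matrix.conjTranspose_conjTranspose,
      Matrix.mul_assoc]
  calc ψᴴ * (w * H k * wᴴ) * ψ
      = Eᴴ * (S⁻¹ * P * w) * H k * (S⁻¹ * P * w)ᴴ * E := by
        rw [hψ]
        rw [hψdef]
        simp only [Matrix.conjTranspose_mul, Matrix.conjTranspose_conjTranspose, hSh,
          Matrix.mul_assoc]
    _ = Eᴴ * T * P * H k * Pᴴ * Tᴴ * E := by
        rw [key]
        simp only [Matrix.conjTranspose_mul, Matrix.mul_assoc]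
end

section
/- With B = Σ_{k=1}^r (A - c_k I_n)^{-1}, suppose C_1, C_2 ∈ ℂ^{n×n} satisfy A C_i - C_i A* = i ϑ_i ϑ_i* (i = 1,2). Then S(t) := exp{-i t B} C_1 exp{i t B*} + exp{i t B} C_2 exp{-i t B*} satisfies the identity A S(t) - S(t) A* = i Π(t) Π(t)* for all t, where B* = Σ_k (A* - c_k I_n)^{-1} and Π(t) = [exp{-itB} ϑ_1, exp{itB} ϑ_2]. -/
open Matrix

lemma commute_A_B {n r : ℕ} (A : Matrix (Fin n) (Fin n) ℂ) (c : Fin r → ℝ)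
    (hc : ∀ k, IsUnit (A - (c k : ℂ) • (1 : Matrix (Fin n) (Fin n) ℂ)).det)
    (B : Matrix (Fin n) (Fin n) ℂ) (hB : B = ∑ k, (A - (c k : ℂ) • 1)⁻¹) :
    Commute A B := by
  subst hB
  refine Commute.sum_right _ _ _ fun k _ => ?_
  set X := A - (c k : ℂ) • (1 : Matrix (Fin n) (Fin n) ℂ) with hX
  have h1 : A * X = X * A := by
    simp [hX, Matrix.mul_sub, Matrix.sub_mul, Matrix.mul_smul, Matrix.smul_mul]
  have hinv : X * X⁻¹ = 1 := Matrix.mul_nonsing_inv _ (hc k)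
  have hinv' : X⁻¹ * X = 1 := Matrix.nonsing_inv_mul _ (hc k)
  unfold Commute SemiconjBy
  calc A * X⁻¹ = X⁻¹ * X * (A * X⁻¹) := by rw [hinv', Matrix.one_mul]
    _ = X⁻¹ * (X * A) * X⁻¹ := by simp only [Matrix.mul_assoc]
    _ = X⁻¹ * (A * X) * X⁻¹ := by rw [← h1]
    _ = X⁻¹ * A * (X * X⁻¹) := by simp only [Matrix.mul_assoc]
    _ = X⁻¹ * A := by rw [hinv, Matrix.mul_one]

lemma sandwich {n : ℕ} (A E C : Matrix (Fin n) (Fin n) ℂ) (hAE : A * E = E * A)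
    (hAE' : Eᴴ * Aᴴ = Aᴴ * Eᴴ) :
    A * (E * C * Eᴴ) - (E * C * Eᴴ) * Aᴴ = E * (A * C - C * Aᴴ) * Eᴴ := by
  rw [Matrix.mul_sub, Matrix.sub_mul]
  congr 1
  · calc A * (E * C * Eᴴ) = A * E * (C * Eᴴ) := by simp only [Matrix.mul_assoc]
      _ = E * A * (C * Eᴴ) := by rw [hAE]
      _ = E * (A * C) * Eᴴ := by simp only [Matrix.mul_assoc]
  · calc E * C * Eᴴ * Aᴴ = E * C * (Eᴴ * Aᴴ) := by simp only [Matrix.mul_assoc]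
      _ = E * C * (Aᴴ * Eᴴ) := by rw [hAE']
      _ = E * (C * Aᴴ) * Eᴴ := by simp only [Matrix.mul_assoc]

/-- With `B = Σ_k (A - c_k I)⁻¹` and `A C_i - C_i A* = i ϑ_i ϑ_i*` (i = 1,2),
`S(t) = exp{-itB} C₁ exp{itB*} + exp{itB} C₂ exp{-itB*}` satisfies
`A S(t) - S(t) A* = i Π(t) Π(t)*` with `Π(t) = [exp{-itB} ϑ₁, exp{itB} ϑ₂]`. -/
theorem stmt12 {n m₁ m₂ r : ℕ} (A : Matrix (Fin n) (Fin n) ℂ) (c : Fin r → ℝ)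
    (ϑ₁ : Matrix (Fin n) (Fin m₁) ℂ) (ϑ₂ : Matrix (Fin n) (Fin m₂) ℂ)
    (hc : ∀ k, IsUnit (A - (c k : ℂ) • (1 : Matrix (Fin n) (Fin n) ℂ)).det)
    (B : Matrix (Fin n) (Fin n) ℂ) (hB : B = ∑ k, (A - (c k : ℂ) • 1)⁻¹)
    (C₁ C₂ : Matrix (Fin n) (Fin n) ℂ)
    (hC₁ : A * C₁ - C₁ * Aᴴ = Complex.I • (ϑ₁ * ϑ₁ᴴ))
    (hC₂ : A * C₂ - C₂ * Aᴴ = Complex.I • (ϑ₂ * ϑ₂ᴴ))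
    (S : ℝ → Matrix (Fin n) (Fin n) ℂ)
    (hS : ∀ t : ℝ, S t
      = NormedSpace.exp ((-Complex.I * (t : ℂ)) • B) * C₁ * NormedSpace.exp ((Complex.I * (t : ℂ)) • Bᴴ)
      + NormedSpace.exp ((Complex.I * (t : ℂ)) • B) * C₂ * NormedSpace.exp ((-Complex.I * (t : ℂ)) • Bᴴ))
    (P : ℝ → Matrix (Fin n) (Fin m₁ ⊕ Fin m₂) ℂ)
    (hP : ∀ t : ℝ, P t = Matrix.fromCols
      (NormedSpace.exp ((-Complex.I * (t : ℂ)) • B) * ϑ₁)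
      (NormedSpace.exp ((Complex.I * (t : ℂ)) • B) * ϑ₂)) :
    ∀ t, A * S t - S t * Aᴴ = Complex.I • (P t * (P t)ᴴ) := by
  intro t
  have hAB : Commute A B := commute_A_B A c hc B hB
  set E₁ := NormedSpace.exp ((-Complex.I * (t : ℂ)) • B) with hE₁
  set E₂ := NormedSpace.exp ((Complex.I * (t : ℂ)) • B) with hE₂
  have hAE₁ : Commute A E₁ := (hAB.smul_right _).exp_right
  have hAE₂ : Commute A E₂ := (hAB.smul_right _).exp_right
  have hct₁ : E₁ᴴ = NormedSpace.exp ((Complex.I * (t : ℂ)) • Bᴴ) := by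
    rw [hE₁, ← Matrix.exp_conjTranspose, Matrix.conjTranspose_smul]
    congr 1
    simp [Complex.conj_ofReal]
  have hct₂ : E₂ᴴ = NormedSpace.exp ((-Complex.I * (t : ℂ)) • Bᴴ) := by
    rw [hE₂, ← Matrix.exp_conjTranspose, Matrix.conjTranspose_smul]
    congr 1
    simp [Complex.conj_ofReal]
  have hS' : S t = E₁ * C₁ * E₁ᴴ + E₂ * C₂ * E₂ᴴ := by
    rw [hS t, hct₁, hct₂]
  have hAE₁' : E₁ᴴ * Aᴴ = Aᴴ * E₁ᴴ := by
    rw [← Matrix.conjTranspose_mul, ← Matrix.conjTranspose_mul, hAE₁.eq]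
  have hAE₂' : E₂ᴴ * Aᴴ = Aᴴ * E₂ᴴ := by
    rw [← Matrix.conjTranspose_mul, ← Matrix.conjTranspose_mul, hAE₂.eq]
  have hPP : P t * (P t)ᴴ = E₁ * ϑ₁ * (E₁ * ϑ₁)ᴴ + E₂ * ϑ₂ * (E₂ * ϑ₂)ᴴ := by
    rw [hP t, Matrix.conjTranspose_fromCols_eq_fromRows_conjTranspose,
      Matrix.fromCols_mul_fromRows]
  rw [hS', hPP]
  calc A * (E₁ * C₁ * E₁ᴴ + E₂ * C₂ * E₂ᴴ) - (E₁ * C₁ * E₁ᴴ + E₂ * C₂ * E₂ᴴ) * Aᴴ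
      = (A * (E₁ * C₁ * E₁ᴴ) - (E₁ * C₁ * E₁ᴴ) * Aᴴ)
        + (A * (E₂ * C₂ * E₂ᴴ) - (E₂ * C₂ * E₂ᴴ) * Aᴴ) := by noncomm_ring
    _ = E₁ * (A * C₁ - C₁ * Aᴴ) * E₁ᴴ + E₂ * (A * C₂ - C₂ * Aᴴ) * E₂ᴴ := by
        rw [sandwich A E₁ C₁ hAE₁.eq hAE₁', sandwich A E₂ C₂ hAE₂.eq hAE₂']
    _ = Complex.I • (E₁ * ϑ₁ * (E₁ * ϑ₁)ᴴ + E₂ * ϑ₂ * (E₂ * ϑ₂)ᴴ) := by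
        rw [hC₁, hC₂, smul_add]
        rw [Matrix.conjTranspose_mul, Matrix.conjTranspose_mul]
        rw [Matrix.mul_smul, Matrix.smul_mul]
        rw [Matrix.mul_smul, Matrix.smul_mul]
        simp only [Matrix.mul_assoc]
end
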